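/- The function f(α) = ((1-2α)/2) ln((1-α)/α) / (Φ⁻¹(α))² tends to 1/4 as α → 0⁺. -/

import Mathlib

open Real Set Filter Topology

noncomputable def phi (y : ℝ) : ℝ := (Real.sqrt (2 * Real.pi))⁻¹ * Real.exp (-y ^ 2 / 2)

noncomputable def Phi (x : ℝ) : ℝ := ∫ y in Set.Iic x, phi y

noncomputable def PhiInv (a : ℝ) : ℝ := Function.invFun Phi a

open MeasureTheory ProbabilityTheory intervalIntegral

/-!
Substituting `α = Φ x` turns the limit at `0⁺` into a limit at `x → -∞`, since `Φ` maps
`atBot` onto `𝓝[>] 0`. There the quantity is `(1 - 2Φ x)/2 · (log (1 - Φ x) - log (Φ x)) / x²`,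
and everything hinges on `log (Φ x) / x² → -1/2`. This follows from the Gaussian tail bounds
`φ (x - 1) ≤ Φ x ≤ exp (-x²/2)` for `x ≤ 0`: the lower one because `φ ≥ φ (x - 1)` on `[x - 1, x]`,
the upper one is the Chernoff bound `Φ x ≤ exp (-t x) · E[exp (t Z)]` at `t = x`.
-/

theorem map_atBot_eq_nhdsGT_of_continuous {α β : Type*} [ConditionallyCompleteLinearOrder α]
    [TopologicalSpace α] [OrderTopology α] [DenselyOrdered α] [LinearOrder β]
    [TopologicalSpace β] [OrderTopology β] {f : α → β} {a : β} (hcont : Continuous f)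
    (hlim : Tendsto f atBot (𝓝 a)) (hgt : ∀ x, a < f x) : map f atBot = 𝓝[>] a := by
  refine le_antisymm (tendsto_nhdsWithin_of_tendsto_nhds_of_eventually_within f hlim
    (.of_forall hgt)) fun s hs => ?_
  obtain ⟨x, hx⟩ := mem_atBot_sets.1 (mem_map.1 hs)
  filter_upwards [Ioo_mem_nhdsGT (hgt x)] with b ⟨hab, hbx⟩
  obtain ⟨y₀, hy₀b, hy₀x⟩ := ((hlim.eventually_lt_const hab).and (eventually_le_atBot x)).exists
  obtain ⟨y, hy, rfl⟩ := intermediate_value_Icc hy₀x hcont.continuousOn ⟨hy₀b.le, hbx.le⟩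
  exact hx y hy.2

lemma phi_eq_gaussianPDFReal : phi = gaussianPDFReal 0 1 := by
  ext y
  simp [phi, gaussianPDFReal]

lemma integrable_phi : Integrable phi :=
  phi_eq_gaussianPDFReal ▸ integrable_gaussianPDFReal 0 1

lemma phi_pos (y : ℝ) : 0 < phi y :=
  phi_eq_gaussianPDFReal ▸ gaussianPDFReal_pos 0 1 y one_ne_zero

lemma log_phi (y : ℝ) : log (phi y) = log (Real.sqrt (2 * π))⁻¹ - y ^ 2 / 2 := by
  rw [phi, log_mul (by positivity) (exp_ne_zero _), log_exp]
  ring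

lemma Phi_eq_cdf : Phi = cdf (gaussianReal 0 1) := by
  ext x
  rw [cdf_eq_real, measureReal_def, gaussianReal_apply_eq_integral _ one_ne_zero,
    ENNReal.toReal_ofReal (setIntegral_nonneg measurableSet_Iic fun y _ =>
      gaussianPDFReal_nonneg _ _ _), ← phi_eq_gaussianPDFReal, Phi]

lemma Phi_sub_Phi (x y : ℝ) : Phi y - Phi x = ∫ t in x..y, phi t :=
  integral_Iic_sub_Iic integrable_phi.integrableOn integrable_phi.integrableOn

lemma strictMono_Phi : StrictMono Phi := fun x y hxy => by
  have := intervalIntegral_pos_of_pos integrable_phi.intervalIntegrable phi_pos hxy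
  linarith [Phi_sub_Phi x y]

lemma Phi_pos (x : ℝ) : 0 < Phi x :=
  (Phi_eq_cdf ▸ cdf_nonneg _ (x - 1)).trans_lt (strictMono_Phi (sub_one_lt x))

lemma Phi_lt_one (x : ℝ) : Phi x < 1 :=
  (strictMono_Phi (lt_add_one x)).trans_le (Phi_eq_cdf ▸ cdf_le_one _ (x + 1))

lemma continuous_Phi : Continuous Phi := by
  have h : Phi = fun x => Phi 0 + ∫ t in (0 : ℝ)..x, phi t := by
    ext x
    linarith [Phi_sub_Phi 0 x]
  rw [h]
  exact continuous_const.add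
    (continuous_primitive (fun _ _ => integrable_phi.intervalIntegrable) 0)

lemma tendsto_Phi_atBot : Tendsto Phi atBot (𝓝 0) :=
  Phi_eq_cdf ▸ tendsto_cdf_atBot _

lemma map_Phi_atBot : map Phi atBot = 𝓝[>] 0 :=
  map_atBot_eq_nhdsGT_of_continuous continuous_Phi tendsto_Phi_atBot Phi_pos

lemma PhiInv_Phi (x : ℝ) : PhiInv (Phi x) = x :=
  Function.leftInverse_invFun strictMono_Phi.injective x

lemma Phi_le_exp {x : ℝ} (hx : x ≤ 0) : Phi x ≤ exp (-x ^ 2 / 2) := by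
  have h := measure_le_le_exp_mul_mgf (μ := gaussianReal 0 1) (X := id) x hx
    (integrable_exp_mul_gaussianReal x)
  rw [mgf_id_gaussianReal, ← exp_add] at h
  rw [Phi_eq_cdf, cdf_eq_real]
  convert h using 2
  · rfl
  · push_cast; ring

lemma phi_sub_one_le_Phi {x : ℝ} (hx : x ≤ 0) : phi (x - 1) ≤ Phi x := by
  have hmono : ∫ _ in (x - 1)..x, phi (x - 1) ≤ ∫ t in (x - 1)..x, phi t := by
    refine integral_mono_on (by linarith) intervalIntegrable_const
      integrable_phi.intervalIntegrable fun t ht => ?_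
    have : t ^ 2 ≤ (x - 1) ^ 2 := by nlinarith [ht.1, ht.2]
    unfold phi
    gcongr
  rw [intervalIntegral.integral_const, ← Phi_sub_Phi, sub_sub_cancel, one_smul] at hmono
  linarith [Phi_pos (x - 1)]

lemma tendsto_log_Phi_div_sq : Tendsto (fun x => log (Phi x) / x ^ 2) atBot (𝓝 (-1 / 2)) := by
  set c := log (Real.sqrt (2 * π))⁻¹
  have hlower : Tendsto (fun x : ℝ => c * x⁻¹ ^ 2 - (1 - x⁻¹) ^ 2 / 2) atBot (𝓝 (-1 / 2)) := by
    have h := ((show Continuous fun u : ℝ => c * u ^ 2 - (1 - u) ^ 2 / 2 by fun_prop).tendsto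
      0).comp tendsto_inv_atBot_zero
    exact h.trans_eq (by norm_num)
  refine tendsto_of_tendsto_of_tendsto_of_le_of_le' hlower tendsto_const_nhds ?_ ?_
  all_goals filter_upwards [eventually_lt_atBot 0] with x hx
  · have h := log_le_log (phi_pos _) (phi_sub_one_le_Phi hx.le)
    rw [log_phi] at h
    rw [le_div_iff₀ (sq_pos_of_neg hx)]
    calc (c * x⁻¹ ^ 2 - (1 - x⁻¹) ^ 2 / 2) * x ^ 2 = c - (x - 1) ^ 2 / 2 := by
          field_simp [hx.ne]
      _ ≤ log (Phi x) := h
  · have h := log_le_log (Phi_pos x) (Phi_le_exp hx.le)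
    rw [log_exp] at h
    rw [div_le_iff₀ (sq_pos_of_neg hx)]
    linarith

theorem f_limit_zero :
    Filter.Tendsto
      (fun α : ℝ => ((1 - 2 * α) / 2 * Real.log ((1 - α) / α)) / (PhiInv α) ^ 2)
      (𝓝[>] 0) (𝓝 (1 / 4)) := by
  rw [← map_Phi_atBot, tendsto_map'_iff]
  have hsplit : ∀ x, (1 - 2 * Phi x) / 2 * (log (1 - Phi x) * x⁻¹ ^ 2 - log (Phi x) / x ^ 2) =
      ((1 - 2 * Phi x) / 2 * log ((1 - Phi x) / Phi x)) / PhiInv (Phi x) ^ 2 := fun x => by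
    rw [PhiInv_Phi, log_div (sub_pos.2 (Phi_lt_one x)).ne' (Phi_pos x).ne']
    ring
  have hlog : Tendsto (fun x => log (1 - Phi x)) atBot (𝓝 0) := by
    simpa using (tendsto_const_nhds.sub tendsto_Phi_atBot).log (by norm_num : (1 : ℝ) - 0 ≠ 0)
  have hlim := (((tendsto_const_nhds (x := (1 : ℝ))).sub
    (tendsto_Phi_atBot.const_mul 2)).div_const 2).mul
    ((hlog.mul (tendsto_inv_atBot_zero.pow 2)).sub tendsto_log_Phi_div_sq)
  exact (hlim.congr hsplit).trans_eq (by norm_num)
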